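/- arXiv:math/9201260 — 4 statements merged into one kernel-verified Lean document; each statement's English description precedes it below -/
import Mathlib

section
/- An entire function f : ℂ → ℂ, not identically zero, which satisfies |f(z)| ≤ C·exp(C·|z|^ρ) for all z with ρ = m/(m-1) for some integer m ≥ 3, and satisfies |f(x)| ≥ δ·exp(δ·|x|^ρ) for all real x for some δ > 0, must have at least one zero in ℂ. -/
/-!
If `f` had no zeros, then `f = exp ∘ g` with `g` entire and `Re g(z) ≤ log C + C‖z‖^ρ`.
By Borel–Carathéodory, `‖g(z)‖ = O(‖z‖^ρ)`, so Cauchy's estimates kill every Taylor coefficient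
of order `> ρ`; as `ρ < 2`, `g` is affine. On the real line `‖f(x)‖ ‖f(-x)‖ = exp (2 Re g(0))`
is then bounded, whereas the lower bound makes it at least `δ² exp (2δ|x|^ρ)`.
-/

open Metric Set Filter Topology

namespace Complex

theorem exists_differentiable_exp_eq {f : ℂ → ℂ} (hf : Differentiable ℂ f)
    (hf₀ : ∀ z, f z ≠ 0) : ∃ g : ℂ → ℂ, Differentiable ℂ g ∧ ∀ z, exp (g z) = f z := by
  have hf' : Differentiable ℂ (deriv f) :=
    differentiableOn_univ.mp (hf.differentiableOn.deriv isOpen_univ)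
  obtain ⟨g, hg₀, hg⟩ :=
    (hf'.div hf hf₀).isExactOn_univ.with_val_at 0 (log (f 0))
  have hg' (z : ℂ) : HasDerivAt g (deriv f z / f z) z := hg z (mem_univ z)
  refine ⟨g, fun z => (hg' z).differentiableAt, fun z => ?_⟩
  have hderiv (z : ℂ) : HasDerivAt (fun w => f w * exp (-g w)) 0 z := by
    refine ((hf z).hasDerivAt.mul (hg' z).neg.cexp).congr_deriv ?_
    field_simp [hf₀ z]
    ring
  have hconst := is_const_of_deriv_eq_zero (fun w => (hderiv w).differentiableAt)
    (fun w => (hderiv w).deriv) z 0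
  simp only [hg₀, exp_neg, exp_log (hf₀ 0), mul_inv_cancel₀ (hf₀ 0)] at hconst
  rw [mul_inv_eq_one₀ (exp_ne_zero _)] at hconst
  exact hconst.symm

theorem iteratedDeriv_eq_zero_of_norm_le_rpow {E : Type*} [NormedAddCommGroup E]
    [NormedSpace ℂ E] [CompleteSpace E] {g : ℂ → E} (hg : Differentiable ℂ g) {K ρ : ℝ}
    {n : ℕ} (hn : ρ < n) (hbound : ∀ z, 1 ≤ ‖z‖ → ‖g z‖ ≤ K * ‖z‖ ^ ρ) :
    iteratedDeriv n g 0 = 0 := by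
  have hle (R : ℝ) (hR : 1 ≤ R) : ‖iteratedDeriv n g 0‖ ≤ n.factorial * K * R ^ (ρ - n) := by
    have hR₀ : 0 < R := by linarith
    have hsphere (z : ℂ) (hz : z ∈ sphere 0 R) : ‖g z‖ ≤ K * R ^ ρ := by
      rw [mem_sphere_zero_iff_norm] at hz
      exact hz ▸ hbound z (hz ▸ hR)
    calc ‖iteratedDeriv n g 0‖ ≤ n.factorial * (K * R ^ ρ) / R ^ n :=
          norm_iteratedDeriv_le_of_forall_mem_sphere_norm_le n hR₀ hg.diffContOnCl hsphere
      _ = n.factorial * K * R ^ (ρ - n) := by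
          rw [Real.rpow_sub hR₀, Real.rpow_natCast]
          ring
  have hlim : Tendsto (fun R : ℝ => n.factorial * K * R ^ (ρ - n)) atTop (𝓝 0) := by
    simpa using (tendsto_rpow_neg_atTop (sub_pos.mpr hn)).const_mul (n.factorial * K)
  exact norm_le_zero_iff.mp (ge_of_tendsto hlim (eventually_atTop.mpr ⟨1, hle⟩))

theorem eq_add_smul_of_norm_le_rpow {E : Type*} [NormedAddCommGroup E]
    [NormedSpace ℂ E] [CompleteSpace E] {g : ℂ → E} (hg : Differentiable ℂ g) {K ρ : ℝ}
    (hρ : ρ < 2) (hbound : ∀ z, 1 ≤ ‖z‖ → ‖g z‖ ≤ K * ‖z‖ ^ ρ) (z : ℂ) :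
    g z = g 0 + z • deriv g 0 := by
  have hvanish (n : ℕ) (hn : n ∉ Finset.range 2) :
      (n.factorial : ℂ)⁻¹ • (z - 0) ^ n • iteratedDeriv n g 0 = 0 := by
    have h2n : (2 : ℝ) ≤ n := by exact_mod_cast not_lt.mp (Finset.mem_range.not.mp hn)
    rw [iteratedDeriv_eq_zero_of_norm_le_rpow hg (hρ.trans_le h2n) hbound, smul_zero, smul_zero]
  rw [(hasSum_taylorSeries_of_entire hg 0 z).unique (hasSum_sum_of_ne_finset_zero hvanish)]
  simp [Finset.sum_range_succ]

theorem norm_le_of_re_le_rpow {g : ℂ → ℂ} (hg : Differentiable ℂ g) {A B ρ : ℝ} (hρ : 0 ≤ ρ)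
    (hre : ∀ z, (g z).re ≤ A + B * ‖z‖ ^ ρ) :
    ∃ K, ∀ z, 1 ≤ ‖z‖ → ‖g z‖ ≤ K * ‖z‖ ^ ρ := by
  set M₀ := |A| + 1 + |B| * 2 ^ ρ
  refine ⟨2 * M₀ + 3 * ‖g 0‖, fun z hz => ?_⟩
  set R := ‖z‖
  have hR₀ : 0 < R := by linarith
  have hRρ : 1 ≤ R ^ ρ := Real.one_le_rpow hz hρ
  have hM : 0 < M₀ * R ^ ρ := by positivity
  have hmaps : MapsTo g (ball 0 (2 * R)) {w | w.re ≤ M₀ * R ^ ρ} := by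
    intro w hw
    have hw' : ‖w‖ ^ ρ ≤ 2 ^ ρ * R ^ ρ := by
      rw [← Real.mul_rpow zero_le_two hR₀.le]
      exact Real.rpow_le_rpow (norm_nonneg w) (mem_ball_zero_iff.mp hw).le hρ
    have hB : B * ‖w‖ ^ ρ ≤ |B| * (2 ^ ρ * R ^ ρ) :=
      (mul_le_mul_of_nonneg_right (le_abs_self B) (by positivity)).trans
        (mul_le_mul_of_nonneg_left hw' (abs_nonneg B))
    have hA : A ≤ |A| * R ^ ρ := (le_abs_self A).trans (le_mul_of_one_le_right (abs_nonneg A) hRρ)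
    calc (g w).re ≤ A + B * ‖w‖ ^ ρ := hre w
      _ ≤ M₀ * R ^ ρ := by linarith
  have hz : z ∈ ball 0 (2 * R) := mem_ball_zero_iff.mpr (by linarith)
  calc ‖g z‖ ≤ 2 * (M₀ * R ^ ρ) * R / (2 * R - R) + ‖g 0‖ * (2 * R + R) / (2 * R - R) :=
        borelCaratheodory hM hg.differentiableOn hmaps (by positivity) hz
    _ = 2 * (M₀ * R ^ ρ) + 3 * ‖g 0‖ := by field_simp; ring
    _ ≤ (2 * M₀ + 3 * ‖g 0‖) * R ^ ρ := by nlinarith [norm_nonneg (g 0)]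

end Complex

theorem Real.exists_exp_add_mul_lt_mul_exp_rpow {δ ρ : ℝ} (hδ : 0 < δ) (hρ : 0 < ρ) (α β : ℝ) :
    ∃ x : ℝ, exp (β + α * x) < δ * exp (δ * |x| ^ ρ) := by
  by_contra! h
  have hlog (x : ℝ) : log δ + δ * |x| ^ ρ ≤ β + α * x := by
    have := log_le_log (by positivity) (h x)
    rwa [log_mul hδ.ne' (exp_ne_zero _), log_exp, log_exp] at this
  obtain ⟨t, ht, ht₀⟩ := (((tendsto_rpow_atTop hρ).eventually_gt_atTop ((β - log δ) / δ)).and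
    (eventually_ge_atTop 0)).exists
  have hsum := add_le_add (hlog t) (hlog (-t))
  rw [abs_neg, abs_of_nonneg ht₀] at hsum
  rw [div_lt_iff₀ hδ] at ht
  linarith

theorem entire_growth_has_zero_general (m : ℕ) (hm : 3 ≤ m) (f : ℂ → ℂ)
    (hf : Differentiable ℂ f)
    (C : ℝ) (hC : 0 < C)
    (hub : ∀ z : ℂ, ‖f z‖ ≤ C * Real.exp (C * ‖z‖ ^ ((m : ℝ) / (m - 1))))
    (δ : ℝ) (hδ : 0 < δ)
    (hlb : ∀ x : ℝ, δ * Real.exp (δ * |x| ^ ((m : ℝ) / (m - 1))) ≤ ‖f x‖) :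
    ∃ z : ℂ, f z = 0 := by
  by_contra! hf₀
  set ρ : ℝ := (m : ℝ) / (m - 1)
  have hm' : (3 : ℝ) ≤ m := by exact_mod_cast hm
  have hρ₀ : 0 < ρ := div_pos (by linarith) (by linarith)
  have hρ₂ : ρ < 2 := (div_lt_iff₀ (by linarith)).mpr (by linarith)
  obtain ⟨g, hg, hfg⟩ := Complex.exists_differentiable_exp_eq hf hf₀
  have hre (z : ℂ) : (g z).re ≤ Real.log C + C * ‖z‖ ^ ρ := by
    have := Real.log_le_log (Real.exp_pos _) (Complex.norm_exp (g z) ▸ hfg z ▸ hub z)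
    rwa [Real.log_mul hC.ne' (Real.exp_ne_zero _), Real.log_exp, Real.log_exp] at this
  obtain ⟨K, hK⟩ := Complex.norm_le_of_re_le_rpow hg hρ₀.le hre
  obtain ⟨x, hx⟩ := Real.exists_exp_add_mul_lt_mul_exp_rpow hδ hρ₀ (deriv g 0).re (g 0).re
  refine (hlb x).not_gt ?_
  rwa [← hfg, Complex.norm_exp, Complex.eq_add_smul_of_norm_le_rpow hg hρ₂ hK, Complex.add_re,
    smul_eq_mul, Complex.re_ofReal_mul, mul_comm x]

theorem entire_growth_has_zero (m : ℕ) (hm : 3 ≤ m) (f : ℂ → ℂ)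
    (hf : Differentiable ℂ f) (hne : ∃ z, f z ≠ 0)
    (C : ℝ) (hC : 0 < C)
    (hub : ∀ z : ℂ, ‖f z‖ ≤ C * Real.exp (C * ‖z‖ ^ ((m : ℝ) / (m - 1))))
    (δ : ℝ) (hδ : 0 < δ)
    (hlb : ∀ x : ℝ, δ * Real.exp (δ * |x| ^ ((m : ℝ) / (m - 1))) ≤ ‖f x‖) :
    ∃ z : ℂ, f z = 0 :=
  entire_growth_has_zero_general m hm f hf C hC hub δ hδ hlb
end

section
/- If u : ℂ → ℝ is harmonic on all of ℂ and satisfies |u(z)| ≤ C·(1 + |z|)^d for some constants C > 0 and real d ≥ 0, then u is (the restriction to ℂ ≅ ℝ² of) a polynomial function of degree at most ⌊d⌋. -/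
/-!
A harmonic function on `ℂ` is the real part of an entire function `F`. By Borel–Carathéodory, the
one-sided bound `Re F ≤ C (1 + |z|)^d` already gives `|F z| = O((1 + |z|)^d)`, so Cauchy's
estimates on circles of radius `R → ∞` kill every Taylor coefficient of `F` at `0` of order
`n > d`. Hence `F` is a polynomial of degree `≤ ⌊d⌋` in `z = x + iy`, and its real part is a real
polynomial in `x, y` of the same total degree.
-/

open Complex Metric Finset Filter Topology InnerProductSpace Laplacian
open scoped Nat

theorem laplacian_complexPlane_apply {F : Type*} [NormedAddCommGroup F] [NormedSpace ℝ F]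
    {f : ℂ → F} {z : ℂ} (hf : ContDiffAt ℝ 2 f z) :
    Δ f z = fderiv ℝ (fun w => fderiv ℝ f w 1) z 1 + fderiv ℝ (fun w => fderiv ℝ f w I) z I := by
  have hf' : DifferentiableAt ℝ (fderiv ℝ f) z :=
    (hf.fderiv_right (m := 1) (by norm_num)).differentiableAt (by norm_num)
  simp [laplacian_eq_iteratedFDeriv_complexPlane, iteratedFDeriv_two_apply,
    fderiv_clm_apply hf' (differentiableAt_const _)]

theorem Differentiable.norm_le_of_re_le_mul_one_add_norm_rpow {f : ℂ → ℂ}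
    (hf : Differentiable ℂ f) {C d : ℝ} (hC : 0 < C) (hd : 0 ≤ d) (hre : ∀ z, (f z).re ≤ C * (1 + ‖z‖) ^ d) (z : ℂ) :
    ‖f z‖ ≤ (2 ^ (d + 1) * C + 3 * ‖f 0‖) * (1 + ‖z‖) ^ d := by
  -- On the disc of radius `2r + 1` both Borel–Carathéodory fractions are bounded by constants.
  set r := ‖z‖
  have hr : 0 ≤ r := norm_nonneg z
  have hmaps : Set.MapsTo f (ball 0 (2 * r + 1)) {w | w.re ≤ C * (2 * (1 + r)) ^ d} := by
    intro w hw
    calc (f w).re ≤ C * (1 + ‖w‖) ^ d := hre w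
      _ ≤ C * (2 * (1 + r)) ^ d := by
        gcongr
        linarith [mem_ball_zero_iff.mp hw]
  have hbc := borelCaratheodory (by positivity) hf.differentiableOn hmaps (by positivity)
    (mem_ball_zero_iff.mpr (by linarith))
  have hone : 1 ≤ (1 + r) ^ d := Real.one_le_rpow (by linarith) hd
  have h2 : (2 * (1 + r)) ^ d = 2 ^ d * (1 + r) ^ d := Real.mul_rpow (by norm_num) (by linarith)
  have h3 : (2 : ℝ) ^ (d + 1) = 2 * 2 ^ d := by rw [Real.rpow_add_one (by norm_num)]; ring
  calc ‖f z‖ ≤ 2 * (C * (2 * (1 + r)) ^ d) * r / (2 * r + 1 - r)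
        + ‖f 0‖ * (2 * r + 1 + r) / (2 * r + 1 - r) := hbc
    _ ≤ 2 * (C * (2 * (1 + r)) ^ d) + 3 * ‖f 0‖ := by
        gcongr
        · rw [div_le_iff₀ (by linarith)]
          nlinarith [show 0 ≤ C * (2 * (1 + r)) ^ d by positivity]
        · rw [div_le_iff₀ (by linarith)]
          nlinarith [norm_nonneg (f 0)]
    _ ≤ (2 ^ (d + 1) * C + 3 * ‖f 0‖) * (1 + ‖z‖) ^ d := by
        rw [h2, h3]
        nlinarith [norm_nonneg (f 0), show 0 ≤ C * 2 ^ d * (1 + r) ^ d by positivity]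

section
variable {E : Type*} [NormedAddCommGroup E] [NormedSpace ℂ E] [CompleteSpace E]
  {f : ℂ → E} {C d : ℝ}

theorem Differentiable.iteratedDeriv_eq_zero_of_norm_le (hf : Differentiable ℂ f) (hd : 0 ≤ d)
    (hbound : ∀ z, ‖f z‖ ≤ C * (1 + ‖z‖) ^ d) {n : ℕ} (hn : d < n) :
    iteratedDeriv n f 0 = 0 := by
  have hC : 0 ≤ C := by simpa using (norm_nonneg _).trans (hbound 0)
  have hcauchy : ∀ R : ℝ, 1 ≤ R → ‖iteratedDeriv n f 0‖ ≤ n ! * C * 2 ^ d * R ^ (d - n) := by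
    intro R hR
    have hR0 : 0 < R := by linarith
    calc ‖iteratedDeriv n f 0‖ ≤ n ! * (C * (1 + R) ^ d) / R ^ n :=
          norm_iteratedDeriv_le_of_forall_mem_sphere_norm_le n hR0
            hf.diffContOnCl fun z hz => by simpa [mem_sphere_zero_iff_norm.mp hz] using hbound z
      _ ≤ n ! * (C * (2 * R) ^ d) / R ^ n := by gcongr; linarith
      _ = n ! * C * 2 ^ d * R ^ (d - n) := by
        rw [Real.mul_rpow (by norm_num) hR0.le, Real.rpow_sub hR0, Real.rpow_natCast]
        ring
  have hlim : Tendsto (fun R : ℝ => n ! * C * 2 ^ d * R ^ (d - n)) atTop (𝓝 0) := by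
    simpa using (tendsto_rpow_neg_atTop (by linarith : 0 < (n : ℝ) - d)).const_mul
      (n ! * C * 2 ^ d)
  exact norm_le_zero_iff.mp <|
    ge_of_tendsto hlim ((eventually_ge_atTop 1).mono hcauchy)

theorem Differentiable.eq_sum_range_of_norm_le (hf : Differentiable ℂ f) (hd : 0 ≤ d)
    (hbound : ∀ z, ‖f z‖ ≤ C * (1 + ‖z‖) ^ d) (z : ℂ) :
    f z = ∑ n ∈ range (⌊d⌋₊ + 1), (n ! : ℂ)⁻¹ • z ^ n • iteratedDeriv n f 0 := by
  have htaylor := hasSum_taylorSeries_of_entire hf 0 z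
  rw [sub_zero] at htaylor
  refine htaylor.unique (hasSum_sum_of_ne_finset_zero fun n hn => ?_)
  have hdn : d < n := (Nat.floor_lt hd).mp (by simpa [Nat.lt_succ_iff] using hn)
  rw [hf.iteratedDeriv_eq_zero_of_norm_le hd hbound hdn, smul_zero, smul_zero]

end

namespace MvPolynomial

theorem exists_totalDegree_le_eval_eq_re {σ : Type*} (q : MvPolynomial σ ℂ) :
    ∃ p : MvPolynomial σ ℝ, p.totalDegree ≤ q.totalDegree ∧
      ∀ v : σ → ℝ, eval v p = (eval (fun i => (v i : ℂ)) q).re := by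
  refine ⟨∑ s ∈ q.support, monomial s (q.coeff s).re, ?_, fun v => ?_⟩
  · refine totalDegree_finsetSum_le fun s hs => ?_
    exact (totalDegree_monomial_le s _).trans (le_totalDegree hs)
  · simp only [map_sum, eval_monomial, Finsupp.prod]
    rw [eval_eq, re_sum]
    refine sum_congr rfl fun s _ => ?_
    rw [← re_mul_ofReal, ofReal_prod]
    push_cast
    rfl

theorem exists_totalDegree_le_eval_eq_re_sum_pow (N : ℕ) (a : ℕ → ℂ) :
    ∃ p : MvPolynomial (Fin 2) ℝ, p.totalDegree ≤ N ∧
      ∀ z : ℂ, eval ![z.re, z.im] p = (∑ n ∈ range (N + 1), a n * z ^ n).re := by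
  set B : MvPolynomial (Fin 2) ℂ := X 0 + C I * X 1
  have hB : B.totalDegree ≤ 1 := by
    refine (totalDegree_add _ _).trans (max_le (totalDegree_X 0).le ?_)
    refine (totalDegree_mul _ _).trans ?_
    simp [totalDegree_C, totalDegree_X]
  obtain ⟨p, hp, heval⟩ :=
    exists_totalDegree_le_eval_eq_re (∑ n ∈ range (N + 1), C (a n) * B ^ n)
  refine ⟨p, hp.trans (totalDegree_finsetSum_le fun n hn => ?_), fun z => ?_⟩
  · calc (C (a n) * B ^ n).totalDegree ≤ 0 + n * 1 := by
          refine (totalDegree_mul _ _).trans (add_le_add (totalDegree_C _).le ?_)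
          exact (totalDegree_pow _ _).trans (Nat.mul_le_mul_left n hB)
      _ ≤ N := by simpa [Nat.lt_succ_iff] using hn
  · rw [heval]
    congr 1
    simp [B, mul_comm I, re_add_im]

end MvPolynomial

theorem harmonic_polynomial_growth (u : ℂ → ℝ) (hu : ContDiff ℝ 2 u)
    (hharm : ∀ z : ℂ,
      fderiv ℝ (fun w => fderiv ℝ u w 1) z 1
        + fderiv ℝ (fun w => fderiv ℝ u w Complex.I) z Complex.I = 0)
    (C : ℝ) (hC : 0 < C) (d : ℝ) (hd : 0 ≤ d)
    (hgrowth : ∀ z : ℂ, |u z| ≤ C * (1 + ‖z‖) ^ d) :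
    ∃ p : MvPolynomial (Fin 2) ℝ, p.totalDegree ≤ ⌊d⌋₊ ∧
      ∀ z : ℂ, u z = MvPolynomial.eval ![z.re, z.im] p := by
  have hharmonic : HarmonicOnNhd u Set.univ := fun z _ =>
    ⟨hu.contDiffAt, Eventually.of_forall fun w => by
      rw [laplacian_complexPlane_apply hu.contDiffAt, hharm w, Pi.zero_apply]⟩
  obtain ⟨F, hF, hFre⟩ := hharmonic.exists_analyticOnNhd_univ_re_eq
  have hFdiff : Differentiable ℂ F := fun z => (hF z (Set.mem_univ z)).differentiableAt
  have hFbound := hFdiff.norm_le_of_re_le_mul_one_add_norm_rpow hC hd fun z =>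
    (congrFun hFre z).trans_le ((le_abs_self _).trans (hgrowth z))
  obtain ⟨p, hp, hpeval⟩ := MvPolynomial.exists_totalDegree_le_eval_eq_re_sum_pow ⌊d⌋₊
    fun n => (n ! : ℂ)⁻¹ * iteratedDeriv n F 0
  refine ⟨p, hp, fun z => ?_⟩
  rw [hpeval, ← congrFun hFre z, hFdiff.eq_sum_range_of_norm_le hd hFbound z]
  simp only [smul_eq_mul, mul_comm, mul_left_comm]
end

section
/- If g is an entire nonvanishing function and there exist constants C, c > 0 and a real number ρ > 0 with |g(z)| ≤ C·exp(C|z|^ρ) for all z ∈ ℂ, then g = exp(P) for some polynomial P of degree at most ⌊ρ⌋. -/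
/-!
Since `ℂ` is simply connected, the nonvanishing entire function `g` has a holomorphic logarithm
`h`, obtained by integrating `g' / g`. The growth bound on `g` is a one-sided bound
`Re h(z) ≤ log C + C |z|^ρ`, which the Borel–Carathéodory theorem on the disc of radius `2|z|`
upgrades to `|h(z)| ≤ a + b |z|^ρ`. Cauchy's estimates on circles of radius `r → ∞` then kill
every Taylor coefficient of `h` of order `n > ρ`, so `h` is a polynomial of degree `≤ ⌊ρ⌋`.
-/

open Filter Metric Polynomial Topology

namespace Complex

variable {f : ℂ → ℂ}

theorem exists_differentiable_eq_exp_comp (hf : Differentiable ℂ f) (hf₀ : ∀ z, f z ≠ 0) :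
    ∃ h : ℂ → ℂ, Differentiable ℂ h ∧ ∀ z, f z = exp (h z) := by
  have hlogDeriv : Differentiable ℂ fun z ↦ deriv f z / f z := hf.deriv.div hf hf₀
  obtain ⟨h, hh₀, hh⟩ := hlogDeriv.isExactOn_univ.with_val_at 0 (log (f 0))
  have hh' : ∀ z, HasDerivAt h (deriv f z / f z) z := fun z ↦ hh z trivial
  have hconst : ∀ z, deriv (fun w ↦ f w * exp (-h w)) z = 0 := fun z ↦ by
    refine ((hf z).hasDerivAt.mul (hh' z).neg.cexp).deriv.trans ?_
    field_simp [hf₀ z]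
    ring
  have hhd : Differentiable ℂ h := fun z ↦ (hh' z).differentiableAt
  refine ⟨h, hhd, fun z ↦ ?_⟩
  have : f z * exp (-h z) = f 0 * exp (-h 0) :=
    is_const_of_deriv_eq_zero (f := fun w ↦ f w * exp (-h w)) (by fun_prop) hconst z 0
  rwa [hh₀, exp_neg, exp_neg, exp_log (hf₀ 0), mul_inv_cancel₀ (hf₀ 0),
    mul_inv_eq_one₀ (exp_ne_zero _)] at this

theorem exists_norm_le_of_re_le_rpow (hf : Differentiable ℂ f) {A B ρ : ℝ} (hρ : 0 ≤ ρ)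
    (hre : ∀ z, (f z).re ≤ A + B * ‖z‖ ^ ρ) :
    ∃ a b : ℝ, ∀ z, ‖f z‖ ≤ a + b * ‖z‖ ^ ρ := by
  refine ⟨2 * (|A| + 1) + 3 * ‖f 0‖, 2 * |B| * 2 ^ ρ, fun z ↦ ?_⟩
  rcases eq_or_ne z 0 with rfl | hz
  · have : 0 ≤ 2 * (|A| + 1) + 2 * |B| * 2 ^ ρ * ‖(0 : ℂ)‖ ^ ρ := by positivity
    linarith [norm_nonneg (f 0)]
  set r := ‖z‖
  have hr : 0 < r := norm_pos_iff.2 hz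
  set M := |A| + 1 + |B| * (2 * r) ^ ρ
  have hM : 0 < M := by positivity
  have hmaps : Set.MapsTo f (ball 0 (2 * r)) {w | w.re ≤ M} := fun w hw ↦ by
    have hw : ‖w‖ ^ ρ ≤ (2 * r) ^ ρ :=
      Real.rpow_le_rpow (norm_nonneg w) (mem_ball_zero_iff.1 hw).le hρ
    calc (f w).re ≤ A + B * ‖w‖ ^ ρ := hre w
      _ ≤ |A| + |B| * (2 * r) ^ ρ :=
        add_le_add (le_abs_self A) (mul_le_mul (le_abs_self B) hw (by positivity) (abs_nonneg B))
      _ ≤ M := by linarith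
  calc ‖f z‖ ≤ 2 * M * r / (2 * r - r) + ‖f 0‖ * (2 * r + r) / (2 * r - r) :=
        borelCaratheodory hM hf.differentiableOn hmaps (by positivity)
          (mem_ball_zero_iff.2 (by linarith))
    _ = 2 * (|A| + 1) + 3 * ‖f 0‖ + 2 * |B| * 2 ^ ρ * r ^ ρ := by
      simp only [M, Real.mul_rpow zero_le_two hr.le]
      field_simp
      ring

theorem iteratedDeriv_eq_zero_of_norm_le_rpow_s9 (hf : Differentiable ℂ f) {c : ℂ} {a b ρ : ℝ}
    (hρ : 0 ≤ ρ) (hbd : ∀ z, ‖f z‖ ≤ a + b * ‖z - c‖ ^ ρ) {n : ℕ} (hn : ρ < n) :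
    iteratedDeriv n f c = 0 := by
  have hcauchy : ∀ r : ℝ, 0 < r →
      ‖iteratedDeriv n f c‖ ≤ n.factorial * (a * r ^ (-n : ℝ) + b * r ^ (ρ - n)) := fun r hr ↦ by
    refine (norm_iteratedDeriv_le_of_forall_mem_sphere_norm_le n hr hf.diffContOnCl
      fun z hz ↦ (hbd z).trans_eq (by rw [mem_sphere_iff_norm.1 hz])).trans_eq ?_
    rw [Real.rpow_neg hr.le, Real.rpow_sub hr, Real.rpow_natCast]
    field_simp
  have hdecay : Tendsto (fun r : ℝ ↦ n.factorial * (a * r ^ (-n : ℝ) + b * r ^ (ρ - n)))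
      atTop (𝓝 0) := by
    have := ((tendsto_rpow_neg_atTop (by linarith : (0 : ℝ) < n)).const_mul a |>.add
      ((tendsto_rpow_neg_atTop (by linarith : (0 : ℝ) < n - ρ)).const_mul b)).const_mul
      (n.factorial : ℝ)
    rw [show ρ - n = -(n - ρ) by ring]
    simpa only [mul_zero, add_zero] using this
  exact norm_le_zero_iff.1 <| ge_of_tendsto hdecay <| (eventually_gt_atTop 0).mono hcauchy

theorem exists_polynomial_of_iteratedDeriv_eq_zero (hf : Differentiable ℂ f) {d : ℕ}
    (hd : ∀ n, d < n → iteratedDeriv n f 0 = 0) :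
    ∃ P : ℂ[X], P.natDegree ≤ d ∧ ∀ z, f z = P.eval z := by
  refine ⟨∑ n ∈ Finset.range (d + 1), C ((n.factorial : ℂ)⁻¹ * iteratedDeriv n f 0) * X ^ n,
    natDegree_sum_le_of_forall_le _ _ fun n hn ↦ ?_, fun z ↦ ?_⟩
  · exact natDegree_C_mul_X_pow_le _ n |>.trans (Nat.lt_succ_iff.1 (Finset.mem_range.1 hn))
  · rw [← taylorSeries_eq_of_entire' 0 z hf, eval_finsetSum]
    simp only [sub_zero, eval_mul, eval_C, eval_pow, eval_X]
    exact tsum_eq_sum fun n hn ↦ by rw [hd n (by simpa using hn), mul_zero, zero_mul]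

theorem exists_polynomial_of_norm_le_rpow (hf : Differentiable ℂ f) {a b ρ : ℝ} (hρ : 0 ≤ ρ)
    (hbd : ∀ z, ‖f z‖ ≤ a + b * ‖z‖ ^ ρ) :
    ∃ P : ℂ[X], P.natDegree ≤ ⌊ρ⌋₊ ∧ ∀ z, f z = P.eval z :=
  exists_polynomial_of_iteratedDeriv_eq_zero hf fun _ hn ↦
    iteratedDeriv_eq_zero_of_norm_le_rpow_s9 hf hρ (by simpa using hbd) ((Nat.floor_lt hρ).1 hn)

end Complex

theorem nonvanishing_entire_eq_exp_poly_general (g : ℂ → ℂ) (hg : Differentiable ℂ g)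
    (hnz : ∀ z, g z ≠ 0) (C ρ : ℝ) (hC : 0 < C) (hρ : 0 < ρ)
    (hub : ∀ z : ℂ, ‖g z‖ ≤ C * Real.exp (C * ‖z‖ ^ ρ)) :
    ∃ P : Polynomial ℂ, P.natDegree ≤ ⌊ρ⌋₊ ∧ ∀ z, g z = Complex.exp (P.eval z) := by
  obtain ⟨h, hh, hgh⟩ := Complex.exists_differentiable_eq_exp_comp hg hnz
  have hre : ∀ z, (h z).re ≤ Real.log C + C * ‖z‖ ^ ρ := fun z ↦ by
    rw [← Real.exp_le_exp, Real.exp_add, Real.exp_log hC, ← Complex.norm_exp, ← hgh]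
    exact hub z
  obtain ⟨a, b, hbd⟩ := Complex.exists_norm_le_of_re_le_rpow hh hρ.le hre
  obtain ⟨P, hdeg, hP⟩ := Complex.exists_polynomial_of_norm_le_rpow hh hρ.le hbd
  exact ⟨P, hdeg, fun z ↦ by rw [hgh, hP]⟩

theorem nonvanishing_entire_eq_exp_poly (g : ℂ → ℂ) (hg : Differentiable ℂ g)
    (hnz : ∀ z, g z ≠ 0) (C c ρ : ℝ) (hC : 0 < C) (hc : 0 < c) (hρ : 0 < ρ)
    (hub : ∀ z : ℂ, ‖g z‖ ≤ C * Real.exp (C * ‖z‖ ^ ρ)) :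
    ∃ P : Polynomial ℂ, P.natDegree ≤ ⌊ρ⌋₊ ∧ ∀ z, g z = Complex.exp (P.eval z) :=
  nonvanishing_entire_eq_exp_poly_general g hg hnz C ρ hC hρ hub
end

section
/- Suppose W : ℂ → ℂ is entire and for every ζ with W(ζ) = 0 there exists a nonzero bounded solution of -f'' + (ζ - m x^{m-1})² f = 0. If W satisfies the growth bounds |W(ζ)| ≤ C exp(C|ζ|^{m/(m-1)}) on ℂ and |W(ζ)| ≥ δ exp(δ|ζ|^{m/(m-1)}) on ℝ with m ≥ 3, then there exists ζ ∈ ℂ \ ℝ and a nonzero bounded f with -f'' + (ζ - m x^{m-1})² f = 0. -/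
/-!
Since the lower bound keeps `W` away from zero on `ℝ`, a counterexample `W` would have no zeros
at all and hence be `exp ∘ h` for an entire `h`. The upper bound gives
`Re h(z) ≤ log C + C |z|^ρ` with `ρ = m / (m - 1) < 2`, so by Borel–Carathéodory
`|h(z)| = O(|z|^ρ)`, and Cauchy's estimates make `h` affine. Then `log |W(x)|` grows at most
linearly along `ℝ`, contradicting `log |W(x)| ≥ log δ + δ |x|^ρ` with `ρ > 1`.
-/

open Complex Metric Filter Topology
open scoped Nat

namespace Complex

theorem exists_differentiable_exp_eq_s17 {W : ℂ → ℂ} (hW : Differentiable ℂ W) (hW₀ : ∀ z, W z ≠ 0) :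
    ∃ h : ℂ → ℂ, Differentiable ℂ h ∧ ∀ z, exp (h z) = W z := by
  obtain ⟨g, hg⟩ := (hW.deriv.div hW hW₀).isExactOn_univ
  have hgd : Differentiable ℂ g := fun z => (hg z (Set.mem_univ z)).differentiableAt
  have hlog : Set.EqOn (logDeriv W) (logDeriv (exp ∘ g)) Set.univ := fun z _ => by
    rw [logDeriv_comp differentiableAt_exp (hgd z), logDeriv_exp, (hg z (Set.mem_univ z)).deriv]
    simp [logDeriv_apply]
  obtain ⟨c, hc, hWc⟩ := (logDeriv_eqOn_iff hW.differentiableOn (hgd.cexp.differentiableOn)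
    isOpen_univ isPreconnected_univ (fun z _ => exp_ne_zero _) (fun z _ => hW₀ z)).1 hlog
  refine ⟨fun z => log c + g z, (differentiable_const _).add hgd, fun z => ?_⟩
  rw [exp_add, exp_log hc, hWc (Set.mem_univ z)]
  rfl

section Growth

variable {E : Type*} [NormedAddCommGroup E] [NormedSpace ℂ E] [CompleteSpace E] {f : ℂ → E}

theorem iteratedDeriv_eq_zero_of_norm_le_add_rpow (hf : Differentiable ℂ f)
    {A B ρ : ℝ} {n : ℕ} (hn : 0 < n) (hρn : ρ < n) (hbound : ∀ z, ‖f z‖ ≤ A + B * ‖z‖ ^ ρ) :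
    iteratedDeriv n f 0 = 0 := by
  have hcauchy : ∀ r > 0,
      ‖iteratedDeriv n f 0‖ ≤ n ! * (A * r ^ (-(n : ℝ)) + B * r ^ (-(n - ρ))) := by
    intro r hr
    have := norm_iteratedDeriv_le_of_forall_mem_sphere_norm_le n hr hf.diffContOnCl
      fun z hz => (mem_sphere_zero_iff_norm.1 hz) ▸ hbound z
    convert this using 1
    rw [neg_sub, Real.rpow_sub hr, Real.rpow_neg hr.le, Real.rpow_natCast]
    field_simp
  have hlim : Tendsto (fun r : ℝ => n ! * (A * r ^ (-(n : ℝ)) + B * r ^ (-(n - ρ))))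
      atTop (𝓝 0) := by
    simpa using (((tendsto_rpow_neg_atTop (Nat.cast_pos.2 hn : (0 : ℝ) < n)).const_mul A).add
      ((tendsto_rpow_neg_atTop (sub_pos.2 hρn)).const_mul B)).const_mul (n ! : ℝ)
  exact norm_le_zero_iff.1 <| ge_of_tendsto hlim <| (eventually_gt_atTop 0).mono hcauchy

theorem eq_add_smul_of_norm_le_add_rpow (hf : Differentiable ℂ f) {A B ρ : ℝ}
    (hρ : ρ < 2) (hbound : ∀ z, ‖f z‖ ≤ A + B * ‖z‖ ^ ρ) (z : ℂ) :
    f z = f 0 + z • deriv f 0 := by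
  have hvanish : ∀ n ∉ Finset.range 2, (n ! : ℂ)⁻¹ • (z - 0) ^ n • iteratedDeriv n f 0 = 0 := by
    intro n hn
    have h2n : 2 ≤ n := by simp only [Finset.mem_range, not_lt] at hn; exact hn
    rw [iteratedDeriv_eq_zero_of_norm_le_add_rpow hf (by omega)
      (hρ.trans_le (by exact_mod_cast h2n)) hbound, smul_zero, smul_zero]
  rw [← taylorSeries_eq_of_entire hf 0 z, tsum_eq_sum hvanish]
  simp [Finset.sum_range_succ]

end Growth

theorem exists_norm_le_add_rpow_of_re_le {f : ℂ → ℂ} (hf : Differentiable ℂ f) {a b ρ : ℝ}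
    (hb : 0 ≤ b) (hρ : 0 ≤ ρ) (hre : ∀ z, (f z).re ≤ a + b * ‖z‖ ^ ρ) :
    ∃ A B : ℝ, ∀ z, ‖f z‖ ≤ A + B * ‖z‖ ^ ρ := by
  refine ⟨2 * (|a| + 1) + 3 * ‖f 0‖, 2 * b * 2 ^ ρ, fun z => ?_⟩
  rcases eq_or_ne z 0 with rfl | hz
  · have : 0 ≤ 2 * b * 2 ^ ρ * ‖(0 : ℂ)‖ ^ ρ := by positivity
    linarith [norm_nonneg (f 0), abs_nonneg a]
  set r := ‖z‖
  have hr : 0 < r := norm_pos_iff.2 hz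
  set M := |a| + 1 + b * (2 * r) ^ ρ
  have hM : 0 < M := by positivity
  have hmaps : Set.MapsTo f (ball 0 (2 * r)) {w | w.re ≤ M} := fun w hw => by
    have : ‖w‖ ^ ρ ≤ (2 * r) ^ ρ :=
      Real.rpow_le_rpow (norm_nonneg w) (mem_ball_zero_iff.1 hw).le hρ
    have := hre w
    show (f w).re ≤ M
    nlinarith [le_abs_self a]
  have hBC := borelCaratheodory hM hf.differentiableOn hmaps (by positivity)
    (mem_ball_zero_iff.2 (by linarith) : z ∈ ball 0 (2 * r))
  have hrhs : 2 * M * r / (2 * r - r) + ‖f 0‖ * (2 * r + r) / (2 * r - r)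
      = 2 * M + 3 * ‖f 0‖ := by
    field_simp; ring
  rw [hrhs] at hBC
  simp only [M, Real.mul_rpow zero_le_two hr.le] at hBC
  linarith

end Complex

theorem exists_add_mul_lt_mul_rpow {ρ δ : ℝ} (hρ : 1 < ρ) (hδ : 0 < δ) (p q : ℝ) :
    ∃ x : ℝ, 0 ≤ x ∧ p + q * x < δ * x ^ ρ := by
  have hlarge : ∀ᶠ x : ℝ in atTop, 1 ≤ x ∧ |p| + |q| + 1 ≤ δ * x ^ (ρ - 1) :=
    (eventually_ge_atTop 1).and
      (((tendsto_rpow_atTop (sub_pos.2 hρ)).const_mul_atTop hδ).eventually_ge_atTop _)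
  obtain ⟨x, hx1, hxρ⟩ := hlarge.exists
  refine ⟨x, by linarith, ?_⟩
  have hsplit : δ * x ^ ρ = x * (δ * x ^ (ρ - 1)) := by
    rw [Real.rpow_sub (by linarith), Real.rpow_one]; field_simp
  rw [hsplit]
  nlinarith [le_abs_self p, le_abs_self q, abs_nonneg p, abs_nonneg q]

theorem exists_nonreal_exceptional_zeta (m : ℕ) (hm : 3 ≤ m) (W : ℂ → ℂ)
    (hW : Differentiable ℂ W)
    (hzero : ∀ ζ : ℂ, W ζ = 0 → ∃ f : ℝ → ℂ, ContDiff ℝ 2 f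
      ∧ (∀ x : ℝ, deriv (deriv f) x = (ζ - m * x ^ (m - 1)) ^ 2 * f x)
      ∧ (∃ M : ℝ, ∀ x, ‖f x‖ ≤ M) ∧ (∃ x, f x ≠ 0))
    (C : ℝ) (hC : 0 < C)
    (hub : ∀ ζ : ℂ, ‖W ζ‖ ≤ C * Real.exp (C * ‖ζ‖ ^ ((m : ℝ) / (m - 1))))
    (δ : ℝ) (hδ : 0 < δ)
    (hlb : ∀ x : ℝ, δ * Real.exp (δ * |x| ^ ((m : ℝ) / (m - 1))) ≤ ‖W x‖) :
    ∃ ζ : ℂ, ζ.im ≠ 0 ∧ ∃ f : ℝ → ℂ, ContDiff ℝ 2 f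
      ∧ (∀ x : ℝ, deriv (deriv f) x = (ζ - m * x ^ (m - 1)) ^ 2 * f x)
      ∧ (∃ M : ℝ, ∀ x, ‖f x‖ ≤ M) ∧ (∃ x, f x ≠ 0) := by
  by_contra hcon
  set ρ : ℝ := (m : ℝ) / (m - 1)
  have hm' : (3 : ℝ) ≤ m := by exact_mod_cast hm
  have hρ₁ : 1 < ρ := by rw [one_lt_div (by linarith)]; linarith
  have hρ₂ : ρ < 2 := by rw [div_lt_iff₀ (by linarith)]; linarith
  have hW₀ : ∀ ζ, W ζ ≠ 0 := by
    intro ζ hζ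
    by_cases him : ζ.im = 0
    · have hlbζ := hlb ζ.re
      rw [show (ζ.re : ℂ) = ζ from ext rfl him.symm, hζ, norm_zero] at hlbζ
      exact (by positivity : 0 < δ * Real.exp (δ * |ζ.re| ^ ρ)).not_ge hlbζ
    · exact hcon ⟨ζ, him, hzero ζ hζ⟩
  obtain ⟨h, hh, hexp⟩ := exists_differentiable_exp_eq_s17 hW hW₀
  have hre : ∀ z, (h z).re ≤ Real.log C + C * ‖z‖ ^ ρ := fun z => by
    rw [← Real.exp_le_exp, Real.exp_add, Real.exp_log hC, ← norm_exp, hexp]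
    exact hub z
  obtain ⟨A, B, hbound⟩ := exists_norm_le_add_rpow_of_re_le hh hC.le (by positivity) hre
  obtain ⟨x, hx, hlt⟩ := exists_add_mul_lt_mul_rpow hρ₁ hδ ((h 0).re - Real.log δ) (deriv h 0).re
  have hlbx : Real.log δ + δ * x ^ ρ ≤ (h x).re := by
    rw [← Real.exp_le_exp, Real.exp_add, Real.exp_log hδ, ← norm_exp, hexp]
    simpa [abs_of_nonneg hx] using hlb x
  rw [eq_add_smul_of_norm_le_add_rpow hh hρ₂ hbound] at hlbx
  simp only [add_re, smul_eq_mul, re_ofReal_mul] at hlbx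
  linarith
end
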